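/- Let E be a real normed vector space and let D ⊆ E be a set of points containing two distinct points x_b and x_k. For a point x_g ∈ D, define its Voronoi cell V_D(x_g) = { x ∈ E : for all x' ∈ D, ‖x_g − x‖ ≤ ‖x' − x‖ }. Let ω ∈ ℝ with 1/2 < ω ≤ 1 and set x_e = ω · x_b + (1 − ω) · x_k. Then x_e ∉ V_D(x_k); that is, the generated query point never lies in the Voronoi cell of the neighbor x_k. -/

import Mathlib

/-!
The query `x_e` is the point `lineMap x_k x_b ω` of the line through `x_k` and `x_b`, so its distances to
`x_k` and `x_b` are `ω ‖x_b - x_k‖` and `|1 - ω| ‖x_b - x_k‖`. For `ω > 1/2` the second is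
strictly smaller, so `x_b` beats `x_k` as a nearest neighbour of `x_e`.
-/

def voronoiCell {E : Type*} [NormedAddCommGroup E] [NormedSpace ℝ E]
    (D : Set E) (x_g : E) : Set E :=
  {x | ∀ x' ∈ D, ‖x_g - x‖ ≤ ‖x' - x‖}

open AffineMap

theorem dist_lineMap_right_lt_left {V P : Type*} [SeminormedAddCommGroup V] [NormedSpace ℝ V]
    [MetricSpace P] [NormedAddTorsor V P] {p₁ p₂ : P} (h : p₁ ≠ p₂) {c : ℝ} (hc : 1 / 2 < c) :
    dist (lineMap p₁ p₂ c) p₂ < dist (lineMap p₁ p₂ c) p₁ := by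
  rw [dist_lineMap_left, dist_lineMap_right, Real.norm_of_nonneg (r := c) (by linarith)]
  have hcoeff : ‖1 - c‖ < c := abs_lt.mpr ⟨by linarith, by linarith⟩
  exact mul_lt_mul_of_pos_right hcoeff (dist_pos.mpr h)

theorem notMem_voronoiCell_of_dist_lt {E : Type*} [NormedAddCommGroup E] [NormedSpace ℝ E]
    {D : Set E} {g x x' : E} (hx' : x' ∈ D) (hlt : dist x' x < dist g x) :
    x ∉ voronoiCell D g := by
  rw [dist_eq_norm, dist_eq_norm] at hlt
  exact fun hx => (hx x' hx').not_gt hlt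

theorem generated_query_not_in_neighbor_cell_general
    {E : Type*} [NormedAddCommGroup E] [NormedSpace ℝ E]
    (D : Set E) (x_b x_k : E) (hb : x_b ∈ D) (hne : x_b ≠ x_k)
    (ω : ℝ) (hω₁ : 1 / 2 < ω) :
    ω • x_b + (1 - ω) • x_k ∉ voronoiCell D x_k := by
  have hquery : ω • x_b + (1 - ω) • x_k = lineMap x_k x_b ω := by
    rw [lineMap_apply_module, add_comm]
  rw [hquery]
  refine notMem_voronoiCell_of_dist_lt hb ?_
  rw [dist_comm x_b, dist_comm x_k]
  exact dist_lineMap_right_lt_left hne.symm hω₁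

/-- The generated query point `x_e = ω • x_b + (1 - ω) • x_k` with `1/2 < ω ≤ 1`
never lies in the Voronoi cell of the neighbor `x_k`. -/
theorem generated_query_not_in_neighbor_cell
    {E : Type*} [NormedAddCommGroup E] [NormedSpace ℝ E]
    (D : Set E) (x_b x_k : E) (hb : x_b ∈ D) (hk : x_k ∈ D) (hne : x_b ≠ x_k)
    (ω : ℝ) (hω₁ : 1 / 2 < ω) (hω₂ : ω ≤ 1) :
    ω • x_b + (1 - ω) • x_k ∉ voronoiCell D x_k :=
  generated_query_not_in_neighbor_cell_general D x_b x_k hb hne ω hω₁
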